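/- arXiv:1706.05736 — 2 statements merged into one kernel-verified Lean document; each statement's English description precedes it below -/
import Mathlib

section
/- Let A be an n×n positive-semidefinite matrix over ℝ or ℂ and let Ω be any n×k matrix. Let P be the orthogonal projector onto the range of A^{1/2}Ω, which is given explicitly by P = (A^{1/2}Ω)(Ω*AΩ)†(A^{1/2}Ω)*. Then the Nyström approximation satisfies AΩ((Ω*AΩ)†)Ω*A = A^{1/2} P A^{1/2}. -/
/-!
Put `B = A^{1/2} Ω`, so that `Ω* A Ω = B* B`. If `X` is a pseudoinverse of the Gram matrix
`B* B`, then `X B*` is a pseudoinverse of `B`: the key identity `B X B* B = B` holds because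
`(B (X B* B - 1))* (B (X B* B - 1)) = 0`. Hence `P = B B†`, which is the orthogonal projector
onto the range of `B`, and `A Ω X Ω* A = A^{1/2} (B X B*) A^{1/2}`.
-/

open Matrix MeasureTheory ProbabilityTheory
open scoped ENNReal NNReal ComplexOrder Classical

namespace PsdSketch

variable {𝕜 : Type*} [RCLike 𝕜]

/-- The four Penrose conditions characterizing the Moore–Penrose pseudoinverse. -/
def IsMoorePenrose {m k : ℕ} (M : Matrix (Fin m) (Fin k) 𝕜)
    (X : Matrix (Fin k) (Fin m) 𝕜) : Prop :=
  M * X * M = M ∧ X * M * X = X ∧ (M * X)ᴴ = M * X ∧ (X * M)ᴴ = X * M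

/-- The Moore–Penrose pseudoinverse `M†` (the unique matrix satisfying the
Penrose conditions). -/
noncomputable def pinv {m k : ℕ} (M : Matrix (Fin m) (Fin k) 𝕜) :
    Matrix (Fin k) (Fin m) 𝕜 :=
  if h : ∃ X, IsMoorePenrose M X then h.choose else 0

/-- The Nyström approximation `Â = A Ω ((Ω* A Ω)†) Ω* A`. -/
noncomputable def nystrom {n k : ℕ} (A : Matrix (Fin n) (Fin n) 𝕜)
    (Ω : Matrix (Fin n) (Fin k) 𝕜) : Matrix (Fin n) (Fin n) 𝕜 :=
  A * Ω * pinv (Ωᴴ * A * Ω) * Ωᴴ * A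

/-- The `i`-th singular value of a square matrix, 0-indexed and listed in weakly
decreasing order (so `sval M 0 = σ₁(M)`), with `sval M i = 0` for `i ≥ n`. -/
noncomputable def sval {n : ℕ} (M : Matrix (Fin n) (Fin n) 𝕜) (i : ℕ) : ℝ :=
  if h : i < n then
    Real.sqrt
      ((Matrix.posSemidef_conjTranspose_mul_self M).1.eigenvalues
        (Tuple.sort (Matrix.posSemidef_conjTranspose_mul_self M).1.eigenvalues
          (Fin.rev ⟨i, h⟩)))
  else 0

/-- The Schatten `p`-norm: the `ℓ_p` norm of the vector of singular values. -/
noncomputable def schatten {n : ℕ} (p : ℝ≥0∞) (M : Matrix (Fin n) (Fin n) 𝕜) : ℝ :=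
  if p = ∞ then sval M 0
  else (∑ i ∈ Finset.range n, sval M i ^ p.toReal) ^ (1 / p.toReal)

/-- `σ_{r+1}^{(p)}(M)`, the optimal rank-`r` approximation error of `M` in the
Schatten `p`-norm: `(Σ_{i > r} σ_i(M)^p)^{1/p}` (for `p = ∞`, `σ_{r+1}(M)`). -/
noncomputable def tailNorm {n : ℕ} (p : ℝ≥0∞) (M : Matrix (Fin n) (Fin n) 𝕜)
    (r : ℕ) : ℝ :=
  if p = ∞ then sval M r
  else (∑ i ∈ Finset.Ico r n, sval M i ^ p.toReal) ^ (1 / p.toReal)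

/-- `B` is a (simultaneous) best rank-`r` approximation of `M` with respect to every
Schatten `p`-norm; this is the defining property of an `r`-truncated SVD `⟦M⟧_r`. -/
def IsBestRankApprox {n : ℕ} (M B : Matrix (Fin n) (Fin n) 𝕜) (r : ℕ) : Prop :=
  B.rank ≤ r ∧
    ∀ p : ℝ≥0∞, 1 ≤ p → ∀ C : Matrix (Fin n) (Fin n) 𝕜, C.rank ≤ r →
      schatten p (M - B) ≤ schatten p (M - C)

/-- `⟦M⟧_r`: a best rank-`r` approximation of `M` (an `r`-truncated SVD). -/
noncomputable def truncate {n : ℕ} (M : Matrix (Fin n) (Fin n) 𝕜) (r : ℕ) :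
    Matrix (Fin n) (Fin n) 𝕜 :=
  if h : ∃ B, IsBestRankApprox M B r then h.choose else 0

/-- The distribution of an `n × k` random matrix with independent standard normal
entries (matrices identified with functions `Fin n → Fin k → ℝ`). -/
noncomputable def gaussianEnsemble (n k : ℕ) : Measure (Fin n → Fin k → ℝ) :=
  Measure.pi fun _ => Measure.pi fun _ => gaussianReal 0 1

/-- The positive-semidefinite square root, as `Matrix.PosSemidef.sqrt` was defined in
Mathlib (Dec 2024); that declaration has since been removed. -/
noncomputable def _root_.Matrix.PosSemidef.sqrt {n : Type*} [Fintype n] [DecidableEq n]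
    {A : Matrix n n 𝕜} (hA : A.PosSemidef) : Matrix n n 𝕜 :=
  hA.1.eigenvectorUnitary.1 * diagonal ((↑) ∘ (√·) ∘ hA.1.eigenvalues) *
    (star hA.1.eigenvectorUnitary : Matrix n n 𝕜)

lemma _root_.Matrix.PosSemidef.sqrt_eq_cfc {n : Type*} [Fintype n] [DecidableEq n]
    {A : Matrix n n 𝕜} (hA : A.PosSemidef) : hA.sqrt = cfc Real.sqrt A := by
  rw [hA.1.cfc_eq, IsHermitian.cfc, Unitary.conjStarAlgAut_apply]
  rfl

lemma _root_.Matrix.PosSemidef.isHermitian_sqrt {n : Type*} [Fintype n] [DecidableEq n]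
    {A : Matrix n n 𝕜} (hA : A.PosSemidef) : hA.sqrt.IsHermitian := by
  rw [hA.sqrt_eq_cfc]
  exact cfc_predicate _ _

lemma _root_.Matrix.PosSemidef.sqrt_mul_self {n : Type*} [Fintype n] [DecidableEq n]
    {A : Matrix n n 𝕜} (hA : A.PosSemidef) : hA.sqrt * hA.sqrt = A := by
  have hfin := A.finite_real_spectrum
  rw [hA.sqrt_eq_cfc, ← cfc_mul _ _ _ (hfin.continuousOn _) (hfin.continuousOn _)]
  conv_rhs => rw [← cfc_id' ℝ A hA.1.isSelfAdjoint]
  refine cfc_congr fun x hx => Real.mul_self_sqrt ?_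
  obtain ⟨i, rfl⟩ := hA.1.spectrum_real_eq_range_eigenvalues ▸ hx
  exact hA.eigenvalues_nonneg i

lemma exists_isMoorePenrose_of_isHermitian {m : ℕ} {M : Matrix (Fin m) (Fin m) 𝕜}
    (hM : M.IsHermitian) : ∃ X, IsMoorePenrose M X := by
  have hfin := M.finite_real_spectrum
  have cfc_mul_cfc : ∀ f g : ℝ → ℝ, cfc f M * cfc g M = cfc (fun x => f x * g x) M :=
    fun f g => (cfc_mul _ _ _ (hfin.continuousOn _) (hfin.continuousOn _)).symm
  have hMid : cfc (fun x : ℝ => x) M = M := cfc_id' ℝ M hM.isSelfAdjoint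
  -- as `0⁻¹ = 0`, `x⁻¹` is a pseudoinverse of every real `x`, hence `cfc (·⁻¹) M` is one of `M`
  set X := cfc (·⁻¹ : ℝ → ℝ) M
  have hMX : M * X = cfc (fun x : ℝ => x * x⁻¹) M := by rw [← cfc_mul_cfc, hMid]
  have hXM : X * M = cfc (fun x : ℝ => x⁻¹ * x) M := by rw [← cfc_mul_cfc, hMid]
  refine ⟨X, ?_, ?_, ?_, ?_⟩
  · calc M * X * M = cfc (fun x : ℝ => x * x⁻¹) M * cfc (fun x : ℝ => x) M := by
          rw [hMX, hMid]
      _ = M := by rw [cfc_mul_cfc]; simp only [mul_inv_mul_cancel, hMid]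
  · calc X * M * X = cfc (fun x : ℝ => x⁻¹ * x) M * X := by rw [hXM]
      _ = X := by
        rw [cfc_mul_cfc]
        exact cfc_congr fun x _ => by simpa using mul_inv_mul_cancel x⁻¹
  · rw [hMX]; exact (cfc_predicate (R := ℝ) _ M : IsSelfAdjoint _)
  · rw [hXM]; exact (cfc_predicate (R := ℝ) _ M : IsSelfAdjoint _)

namespace IsMoorePenrose

section Gram

variable {m k : ℕ} {B : Matrix (Fin m) (Fin k) 𝕜} {X : Matrix (Fin k) (Fin k) 𝕜}

lemma mul_mul_conjTranspose_mul_self (h : IsMoorePenrose (Bᴴ * B) X) :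
    B * X * (Bᴴ * B) = B := by
  set E := X * (Bᴴ * B) - 1
  have hE : Eᴴ = E := by rw [conjTranspose_sub, h.2.2.2, conjTranspose_one]
  have hBE : (B * E)ᴴ * (B * E) = 0 := by
    rw [conjTranspose_mul, hE, Matrix.mul_assoc, ← Matrix.mul_assoc Bᴴ, Matrix.mul_sub,
      ← Matrix.mul_assoc, h.1, Matrix.mul_one, sub_self, Matrix.mul_zero]
  have hBE' : B * E = B * X * (Bᴴ * B) - B := by
    rw [Matrix.mul_sub, Matrix.mul_one, Matrix.mul_assoc]
  rw [← sub_eq_zero, ← hBE']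
  exact conjTranspose_mul_self_eq_zero.mp hBE

lemma mul_conjTranspose (h : IsMoorePenrose (Bᴴ * B) X) : IsMoorePenrose B (X * Bᴴ) := by
  have hB := h.mul_mul_conjTranspose_mul_self
  have hB' : Bᴴ * B * (Xᴴ * Bᴴ) = Bᴴ := by
    simpa only [conjTranspose_mul, conjTranspose_conjTranspose, Matrix.mul_assoc] using
      congrArg conjTranspose hB
  refine ⟨by simpa only [Matrix.mul_assoc] using hB, ?_, ?_, by rw [Matrix.mul_assoc, h.2.2.2]⟩
  · simpa only [Matrix.mul_assoc] using congrArg (· * Bᴴ) h.2.1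
  · calc (B * (X * Bᴴ))ᴴ = B * X * (Bᴴ * B) * (Xᴴ * Bᴴ) := by
          rw [hB, conjTranspose_mul, conjTranspose_mul, conjTranspose_conjTranspose,
            Matrix.mul_assoc]
      _ = B * (X * Bᴴ) := by rw [Matrix.mul_assoc _ (Bᴴ * B), hB', Matrix.mul_assoc]

end Gram

variable {m k : ℕ} {B : Matrix (Fin m) (Fin k) 𝕜} {Y : Matrix (Fin k) (Fin m) 𝕜}

lemma isHermitian_mul (h : IsMoorePenrose B Y) : (B * Y).IsHermitian := h.2.2.1

lemma isIdempotentElem_mul (h : IsMoorePenrose B Y) : IsIdempotentElem (B * Y) := by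
  rw [IsIdempotentElem, ← Matrix.mul_assoc, h.1]

lemma range_mulVecLin_mul (h : IsMoorePenrose B Y) :
    LinearMap.range (B * Y).mulVecLin = LinearMap.range B.mulVecLin := by
  refine le_antisymm ?_ ?_
  · rw [Matrix.mulVecLin_mul]
    exact LinearMap.range_comp_le_range _ _
  · conv_lhs => rw [← h.1, Matrix.mulVecLin_mul]
    exact LinearMap.range_comp_le_range _ _

end IsMoorePenrose

lemma exists_isMoorePenrose {m k : ℕ} (M : Matrix (Fin m) (Fin k) 𝕜) :
    ∃ X, IsMoorePenrose M X :=
  have ⟨X, hX⟩ := exists_isMoorePenrose_of_isHermitian (isHermitian_conjTranspose_mul_self M)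
  ⟨X * Mᴴ, hX.mul_conjTranspose⟩

lemma isMoorePenrose_pinv {m k : ℕ} (M : Matrix (Fin m) (Fin k) 𝕜) :
    IsMoorePenrose M (pinv M) := by
  rw [pinv, dif_pos (exists_isMoorePenrose M)]
  exact (exists_isMoorePenrose M).choose_spec

theorem stmt6 {𝕜 : Type*} [RCLike 𝕜] {n k : ℕ} (A : Matrix (Fin n) (Fin n) 𝕜)
    (hA : A.PosSemidef) (Ω : Matrix (Fin n) (Fin k) 𝕜)
    (P : Matrix (Fin n) (Fin n) 𝕜)
    (hP : P = (hA.sqrt * Ω) * pinv (Ωᴴ * A * Ω) * (hA.sqrt * Ω)ᴴ) :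
    P.IsHermitian ∧ P * P = P ∧
      LinearMap.range P.mulVecLin = LinearMap.range (hA.sqrt * Ω).mulVecLin ∧
      nystrom A Ω = hA.sqrt * P * hA.sqrt := by
  set S := hA.sqrt
  set X := pinv (Ωᴴ * A * Ω)
  have hS : Sᴴ = S := hA.isHermitian_sqrt
  have hSS : S * S = A := hA.sqrt_mul_self
  have hGram : (S * Ω)ᴴ * (S * Ω) = Ωᴴ * A * Ω := by
    rw [conjTranspose_mul, hS, Matrix.mul_assoc, ← Matrix.mul_assoc S, hSS, ← Matrix.mul_assoc]
  have hX : IsMoorePenrose ((S * Ω)ᴴ * (S * Ω)) X := hGram ▸ isMoorePenrose_pinv _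
  have hY : IsMoorePenrose (S * Ω) (X * (S * Ω)ᴴ) := hX.mul_conjTranspose
  rw [Matrix.mul_assoc] at hP
  subst hP
  refine ⟨hY.isHermitian_mul, hY.isIdempotentElem_mul, hY.range_mulVecLin_mul, ?_⟩
  calc nystrom A Ω = S * S * Ω * X * Ωᴴ * (S * S) := by rw [hSS]; rfl
    _ = S * (S * Ω * (X * (S * Ω)ᴴ)) * S := by
      rw [conjTranspose_mul, hS]
      simp only [Matrix.mul_assoc]

end PsdSketch
end

section
/- Let A and B be n×n matrices over ℝ or ℂ with rank(B) ≤ r. Then for every index i ≥ 1, the singular values satisfy σ_{i+r}(A) ≤ σ_i(A − B). -/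
open Matrix MeasureTheory ProbabilityTheory
open scoped ENNReal NNReal ComplexOrder Classical

/-! The singular value `σ_{k+1}(M)` is the least `c ≥ 0` such that `‖M x‖ ≤ c ‖x‖` on some subspace
of codimension at most `k`: the eigenvectors of `MᴴM` for its `n - k` smallest eigenvalues span
such a subspace for `c = σ_{k+1}(M)`, and conversely any such subspace meets the span of the
eigenvectors for the `k + 1` largest eigenvalues in a nonzero vector. Since `A` and `A - B` agree
on `ker B`, which has codimension at most `r`, intersecting `ker B` with a subspace of
codimension `i` on which `‖(A - B) x‖ ≤ σ_{i+1}(A - B) ‖x‖` yields a subspace of codimension at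
most `i + r` on which `‖A x‖ ≤ σ_{i+1}(A - B) ‖x‖`. -/

section

variable {𝕜 ι E : Type*} [RCLike 𝕜] [Fintype ι] [NormedAddCommGroup E] [InnerProductSpace 𝕜 E]

theorem Submodule.finrank_add_finrank_le_finrank_inf_add [FiniteDimensional 𝕜 E]
    (U W : Submodule 𝕜 E) :
    Module.finrank 𝕜 U + Module.finrank 𝕜 W ≤ Module.finrank 𝕜 (U ⊓ W : Submodule 𝕜 E) +
      Module.finrank 𝕜 E := by
  rw [← Submodule.finrank_sup_add_finrank_inf_eq, add_comm]
  exact Nat.add_le_add_left (Submodule.finrank_le _) _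

theorem Matrix.rank_add_finrank_ker_toEuclideanLin [DecidableEq ι] (B : Matrix ι ι 𝕜) :
    B.rank + Module.finrank 𝕜 (LinearMap.ker (Matrix.toEuclideanLin B)) = Fintype.card ι := by
  rw [B.rank_eq_finrank_range_toLin (EuclideanSpace.basisFun ι 𝕜).toBasis
      (EuclideanSpace.basisFun ι 𝕜).toBasis, ← Matrix.toEuclideanLin_eq_toLin_orthonormal,
    LinearMap.finrank_range_add_finrank_ker, finrank_euclideanSpace]

theorem OrthonormalBasis.repr_apply_eq_zero_of_mem_span (b : OrthonormalBasis ι 𝕜 E)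
    {S : Set ι} {x : E} (hx : x ∈ Submodule.span 𝕜 (b '' S)) {j : ι} (hj : j ∉ S) :
    b.repr x j = 0 := by
  induction hx using Submodule.span_induction with
  | mem y hy =>
    obtain ⟨i, hi, rfl⟩ := hy
    rw [b.repr_self, PiLp.single_apply, if_neg (by rintro rfl; exact hj hi)]
  | zero => simp
  | add x y _ _ hx hy => simp [hx, hy]
  | smul a x _ hx => simp [hx]

theorem OrthonormalBasis.finrank_span_image_finset (b : OrthonormalBasis ι 𝕜 E)
    (S : Finset ι) : Module.finrank 𝕜 (Submodule.span 𝕜 (b '' S)) = S.card := by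
  rw [Set.image_eq_range]
  exact (finrank_span_eq_card (b.orthonormal.linearIndependent.comp _ Subtype.coe_injective)).trans
    (by simp)

theorem OrthonormalBasis.sum_mul_norm_repr_sq_le_of_mem_span (b : OrthonormalBasis ι 𝕜 E)
    {S : Set ι} {x : E} (hx : x ∈ Submodule.span 𝕜 (b '' S)) {w : ι → ℝ} {c : ℝ}
    (hw : ∀ j ∈ S, w j ≤ c) : ∑ j, w j * ‖b.repr x j‖ ^ 2 ≤ c * ‖x‖ ^ 2 := by
  rw [← b.repr.norm_map, EuclideanSpace.norm_sq_eq, Finset.mul_sum]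
  refine Finset.sum_le_sum fun j _ => ?_
  by_cases hj : j ∈ S
  · exact mul_le_mul_of_nonneg_right (hw j hj) (by positivity)
  · simp [b.repr_apply_eq_zero_of_mem_span hx hj]

theorem OrthonormalBasis.le_sum_mul_norm_repr_sq_of_mem_span (b : OrthonormalBasis ι 𝕜 E)
    {S : Set ι} {x : E} (hx : x ∈ Submodule.span 𝕜 (b '' S)) {w : ι → ℝ} {c : ℝ}
    (hw : ∀ j ∈ S, c ≤ w j) : c * ‖x‖ ^ 2 ≤ ∑ j, w j * ‖b.repr x j‖ ^ 2 := by
  have := b.sum_mul_norm_repr_sq_le_of_mem_span hx (w := -w) (c := -c) fun j hj => by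
    simpa using hw j hj
  simpa [Finset.sum_neg_distrib] using this

theorem Matrix.IsHermitian.toEuclideanLin_eigenvectorBasis [DecidableEq ι] {H : Matrix ι ι 𝕜}
    (hH : H.IsHermitian) (j : ι) :
    Matrix.toEuclideanLin H (hH.eigenvectorBasis j) =
      (hH.eigenvalues j : 𝕜) • hH.eigenvectorBasis j := by
  apply WithLp.ofLp_injective
  rw [Matrix.ofLp_toLpLin, Matrix.toLin'_apply, hH.mulVec_eigenvectorBasis, WithLp.ofLp_smul,
    RCLike.real_smul_eq_coe_smul (K := 𝕜)]

theorem Matrix.IsHermitian.re_inner_toEuclideanLin_self [DecidableEq ι] {H : Matrix ι ι 𝕜}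
    (hH : H.IsHermitian) (x : EuclideanSpace 𝕜 ι) :
    RCLike.re (inner 𝕜 x (Matrix.toEuclideanLin H x)) =
      ∑ j, hH.eigenvalues j * ‖hH.eigenvectorBasis.repr x j‖ ^ 2 := by
  set b := hH.eigenvectorBasis
  have hsymm := Matrix.isSymmetric_toEuclideanLin_iff.mpr hH
  have hb : ∀ j, inner 𝕜 (b j) (Matrix.toEuclideanLin H x) =
      (hH.eigenvalues j : 𝕜) * b.repr x j := by
    intro j
    rw [← hsymm, hH.toEuclideanLin_eigenvectorBasis, inner_smul_left, RCLike.conj_ofReal,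
      b.repr_apply_apply]
  rw [← b.sum_inner_mul_inner, map_sum]
  refine Finset.sum_congr rfl fun j _ => ?_
  rw [hb, ← inner_conj_symm, ← b.repr_apply_apply, mul_left_comm, RCLike.conj_mul,
    ← RCLike.ofReal_pow, ← RCLike.ofReal_mul, RCLike.ofReal_re]

theorem Matrix.norm_toEuclideanLin_sq [DecidableEq ι] (M : Matrix ι ι 𝕜) (x : EuclideanSpace 𝕜 ι) :
    ‖Matrix.toEuclideanLin M x‖ ^ 2 = RCLike.re (inner 𝕜 x (Matrix.toEuclideanLin (Mᴴ * M) x)) := by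
  rw [Matrix.toLpLin_mul_same, LinearMap.comp_apply,
    Matrix.toEuclideanLin_conjTranspose_eq_adjoint, LinearMap.adjoint_inner_right,
    inner_self_eq_norm_sq]

theorem Matrix.norm_toEuclideanLin_sq_eq_sum_eigenvalues [DecidableEq ι] (M : Matrix ι ι 𝕜)
    (x : EuclideanSpace 𝕜 ι) :
    ‖Matrix.toEuclideanLin M x‖ ^ 2 =
      ∑ j, (posSemidef_conjTranspose_mul_self M).1.eigenvalues j *
        ‖(posSemidef_conjTranspose_mul_self M).1.eigenvectorBasis.repr x j‖ ^ 2 := by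
  rw [M.norm_toEuclideanLin_sq, IsHermitian.re_inner_toEuclideanLin_self]

end

namespace PsdSketch

variable {𝕜 : Type*} [RCLike 𝕜] {n : ℕ}

theorem sval_nonneg (M : Matrix (Fin n) (Fin n) 𝕜) (i : ℕ) : 0 ≤ sval M i := by
  unfold sval
  split
  exacts [Real.sqrt_nonneg _, le_rfl]

theorem exists_finrank_ge_norm_le_sval (M : Matrix (Fin n) (Fin n) 𝕜) (k : ℕ) :
    ∃ W : Submodule 𝕜 (EuclideanSpace 𝕜 (Fin n)), n - k ≤ Module.finrank 𝕜 W ∧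
      ∀ x ∈ W, ‖Matrix.toEuclideanLin M x‖ ≤ sval M k * ‖x‖ := by
  by_cases hk : k < n
  swap
  · exact ⟨⊥, by omega, fun x hx => by simp [(Submodule.mem_bot 𝕜).1 hx]⟩
  set hH := (posSemidef_conjTranspose_mul_self M).1
  set σ := Tuple.sort hH.eigenvalues
  set a : Fin n := Fin.rev ⟨k, hk⟩
  have ha : (a : ℕ) = n - (k + 1) := Fin.val_rev _
  -- `Tuple.sort` is ascending, so `σ '' Iic a` indexes the `n - k` smallest eigenvalues of `MᴴM`.
  refine ⟨Submodule.span 𝕜 (hH.eigenvectorBasis '' ((Finset.Iic a).image σ)), ?_, fun x hx => ?_⟩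
  · rw [OrthonormalBasis.finrank_span_image_finset, Finset.card_image_of_injective _ σ.injective,
      Fin.card_Iic]
    omega
  · have hsq : ‖Matrix.toEuclideanLin M x‖ ^ 2 ≤ (sval M k * ‖x‖) ^ 2 := by
      rw [mul_pow, sval, dif_pos hk,
        Real.sq_sqrt ((posSemidef_conjTranspose_mul_self M).eigenvalues_nonneg _),
        M.norm_toEuclideanLin_sq_eq_sum_eigenvalues]
      refine hH.eigenvectorBasis.sum_mul_norm_repr_sq_le_of_mem_span hx ?_
      rw [Finset.coe_image]
      rintro _ ⟨j, hj, rfl⟩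
      exact Tuple.monotone_sort hH.eigenvalues (Finset.mem_Iic.1 hj)
    exact le_of_pow_le_pow_left₀ two_ne_zero (mul_nonneg (sval_nonneg M k) (norm_nonneg x)) hsq

theorem sval_le_of_norm_le (M : Matrix (Fin n) (Fin n) 𝕜) {k : ℕ}
    (W : Submodule 𝕜 (EuclideanSpace 𝕜 (Fin n))) (hW : n - k ≤ Module.finrank 𝕜 W) {c : ℝ}
    (hc : 0 ≤ c) (hM : ∀ x ∈ W, ‖Matrix.toEuclideanLin M x‖ ≤ c * ‖x‖) : sval M k ≤ c := by
  by_cases hk : k < n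
  swap
  · rwa [sval, dif_neg hk]
  set hH := (posSemidef_conjTranspose_mul_self M).1
  set σ := Tuple.sort hH.eigenvalues
  set a : Fin n := Fin.rev ⟨k, hk⟩
  have ha : (a : ℕ) = n - (k + 1) := Fin.val_rev _
  set U := Submodule.span 𝕜 (hH.eigenvectorBasis '' ((Finset.Ici a).image σ))
  have hU : Module.finrank 𝕜 U = k + 1 := by
    rw [OrthonormalBasis.finrank_span_image_finset, Finset.card_image_of_injective _ σ.injective,
      Fin.card_Ici]
    omega
  have hUW : U ⊓ W ≠ ⊥ := by
    rw [Ne, ← Submodule.finrank_eq_zero]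
    have := Submodule.finrank_add_finrank_le_finrank_inf_add U W
    rw [finrank_euclideanSpace_fin] at this
    omega
  obtain ⟨x, ⟨hxU, hxW⟩, hx0⟩ := Submodule.exists_mem_ne_zero_of_ne_bot hUW
  have hlow : hH.eigenvalues (σ a) * ‖x‖ ^ 2 ≤ ‖Matrix.toEuclideanLin M x‖ ^ 2 := by
    rw [M.norm_toEuclideanLin_sq_eq_sum_eigenvalues]
    refine hH.eigenvectorBasis.le_sum_mul_norm_repr_sq_of_mem_span hxU ?_
    rw [Finset.coe_image]
    rintro _ ⟨j, hj, rfl⟩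
    exact Tuple.monotone_sort hH.eigenvalues (Finset.mem_Ici.1 hj)
  have hup : ‖Matrix.toEuclideanLin M x‖ ^ 2 ≤ c ^ 2 * ‖x‖ ^ 2 := by
    rw [← mul_pow]
    exact pow_le_pow_left₀ (norm_nonneg _) (hM x hxW) 2
  have heig : hH.eigenvalues (σ a) ≤ c ^ 2 :=
    le_of_mul_le_mul_right (hlow.trans hup) (pow_pos (norm_pos_iff.2 hx0) 2)
  rw [sval, dif_pos hk, Real.sqrt_le_left hc]
  exact heig

theorem stmt11 {𝕜 : Type*} [RCLike 𝕜] {n : ℕ} (A B : Matrix (Fin n) (Fin n) 𝕜)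
    (r : ℕ) (hB : B.rank ≤ r) :
    ∀ i : ℕ, sval A (i + r) ≤ sval (A - B) i := by
  intro i
  obtain ⟨W, hW, hAB⟩ := exists_finrank_ge_norm_le_sval (A - B) i
  set K := LinearMap.ker (Matrix.toEuclideanLin B)
  have hK : B.rank + Module.finrank 𝕜 K = n := by
    simpa using B.rank_add_finrank_ker_toEuclideanLin
  have hWK := Submodule.finrank_add_finrank_le_finrank_inf_add W K
  rw [finrank_euclideanSpace_fin] at hWK
  refine sval_le_of_norm_le A (W ⊓ K) (by omega) (sval_nonneg _ _) fun x ⟨hxW, hxK⟩ => ?_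
  have hAx : Matrix.toEuclideanLin A x = Matrix.toEuclideanLin (A - B) x := by
    rw [map_sub, LinearMap.sub_apply, LinearMap.mem_ker.1 hxK, sub_zero]
  exact hAx ▸ hAB x hxW

end PsdSketch
end
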